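/- Let R = k[x,y,z] localized at m = (x,y,z) and let I = (xy, yz, zx). Then the ε-multiplicity of I equals 1/2. -/

import Mathlib

open Pointwise MeasureTheory Filter MvPolynomial ENNReal

noncomputable section

/-- The length `λ_R(M)` of a module, valued in `ℝ≥0∞`. -/
def moduleLength (R M : Type*) [Ring R] [AddCommGroup M] [Module R M] : ℝ≥0∞ :=
  ⨆ s : LTSeries (Submodule R M), (s.length : ℝ≥0∞)

/-- The zeroth local cohomology `H⁰_𝔪(M) = {x ∈ M : 𝔪ⁿ x = 0 for some n}`. -/
def H0 {R : Type*} [CommRing R] (𝔪 : Ideal R) (M : Type*) [AddCommGroup M]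
    [Module R M] : Submodule R M :=
  ⨆ n : ℕ, Submodule.torsionBySet R M ((𝔪 ^ n : Ideal R) : Set R)

/-- The sequence `(d!/n^d) ⬝ λ_R(H⁰_𝔪(R/Iⁿ))` whose limsup is the ε-multiplicity. -/
def epsSeq {R : Type*} [CommRing R] (𝔪 I : Ideal R) (d : ℕ) (n : ℕ) : ℝ≥0∞ :=
  (Nat.factorial d : ℝ≥0∞) / (n : ℝ≥0∞) ^ d *
    moduleLength R ↥(H0 𝔪 (R ⧸ (I ^ n : Ideal R)))

/-- The homogeneous maximal ideal `𝔪 = (x_1, …, x_d)` of the polynomial ring. -/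
def mvMax (k : Type*) [Field k] (d : ℕ) : Ideal (MvPolynomial (Fin d) k) :=
  Ideal.span (Set.range MvPolynomial.X)

lemma mvMax_eq_ker (k : Type*) [Field k] (d : ℕ) :
    mvMax k d = RingHom.ker (constantCoeff : MvPolynomial (Fin d) k →+* k) := by
  ext p
  rw [mvMax, ← Set.image_univ, MvPolynomial.mem_ideal_span_X_image]
  constructor
  · intro h
    simp only [RingHom.mem_ker, constantCoeff_eq]
    by_contra hc
    obtain ⟨i, -, hi⟩ := h 0 (by simpa [MvPolynomial.mem_support_iff] using hc)
    simp at hi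
  · intro h m hm
    simp only [RingHom.mem_ker, constantCoeff_eq] at h
    have hm0 : m ≠ 0 := by
      rintro rfl
      exact (MvPolynomial.mem_support_iff.mp hm) h
    obtain ⟨i, hi⟩ := Finsupp.ne_iff.mp hm0
    exact ⟨i, trivial, by simpa using hi⟩

instance mvMax_isMaximal (k : Type*) [Field k] (d : ℕ) : (mvMax k d).IsMaximal := by
  rw [mvMax_eq_ker]
  exact RingHom.ker_isMaximal_of_surjective _ (fun a => ⟨MvPolynomial.C a, by simp⟩)

instance mvMax_isPrime (k : Type*) [Field k] (d : ℕ) : (mvMax k d).IsPrime :=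
  (mvMax_isMaximal k d).isPrime

/-- The ring `R = k[x_1,…,x_d]` localized at `𝔪 = (x_1,…,x_d)`. -/
abbrev LocPolyRing (k : Type*) [Field k] (d : ℕ) :=
  Localization.AtPrime (mvMax k d)

/-- The ideal of `R = k[x_1,…,x_d]_𝔪` generated by the monomials `x^{v_1},…,x^{v_n}`. -/
def monIdealLoc (k : Type*) [Field k] {d n : ℕ} (v : Fin n → Fin d → ℕ) :
    Ideal (LocPolyRing k d) :=
  Ideal.span (Set.range fun i =>
    algebraMap (MvPolynomial (Fin d) k) (LocPolyRing k d)
      (MvPolynomial.monomial (Finsupp.equivFunOnFinite.symm (v i)) 1))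



namespace EpsAux

/-- The finite set of lattice points giving the length of `H⁰`. -/
def Dfin (n : ℕ) : Finset (ℕ × ℕ × ℕ) :=
  (Finset.range (n+1) ×ˢ Finset.range (n+1) ×ˢ Finset.range (n+1)).filter
    (fun p => n ≤ p.1 + p.2.1 ∧ n ≤ p.2.1 + p.2.2 ∧ n ≤ p.1 + p.2.2 ∧
      p.1 + p.2.1 + p.2.2 < 2*n)

lemma mem_Dfin {n : ℕ} {p : ℕ × ℕ × ℕ} :
    p ∈ Dfin n ↔ p.1 ≤ n ∧ p.2.1 ≤ n ∧ p.2.2 ≤ n ∧ n ≤ p.1 + p.2.1 ∧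
      n ≤ p.2.1 + p.2.2 ∧ n ≤ p.1 + p.2.2 ∧ p.1 + p.2.1 + p.2.2 < 2*n := by
  simp only [Dfin, Finset.mem_filter, Finset.mem_product, Finset.mem_range]
  omega

/-- The triangle `{(b,c) : b + c ≤ M}` inside the square. -/
def triF (M : ℕ) : Finset (ℕ × ℕ) :=
  (Finset.range (M+1) ×ˢ Finset.range (M+1)).filter (fun p => p.1 + p.2 ≤ M)

lemma triF_eq_biUnion (M : ℕ) :
    triF M = (Finset.range (M+1)).biUnion (fun s => Finset.HasAntidiagonal.antidiagonal s) := by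
  ext p
  simp only [triF, Finset.mem_filter, Finset.mem_product, Finset.mem_range,
    Finset.mem_biUnion, Finset.HasAntidiagonal.mem_antidiagonal]
  constructor
  · rintro ⟨⟨h1, h2⟩, h3⟩; exact ⟨p.1 + p.2, by omega, rfl⟩
  · rintro ⟨s, hs, rfl⟩; omega

lemma gauss : ∀ M : ℕ, 2 * (∑ s ∈ Finset.range M, (s+1)) = M * (M+1) := by
  intro M
  induction M with
  | zero => rfl
  | succ m ih => rw [Finset.sum_range_succ]; nlinarith [ih]

lemma card_triF (M : ℕ) : 2 * (triF M).card = (M+1) * (M+2) := by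
  rw [triF_eq_biUnion, Finset.card_biUnion]
  · have h1 : ∑ s ∈ Finset.range (M+1), (Finset.HasAntidiagonal.antidiagonal s).card
        = ∑ s ∈ Finset.range (M+1), (s+1) :=
      Finset.sum_congr rfl (fun s _ => Finset.Nat.card_antidiagonal s)
    rw [h1]
    exact gauss (M+1)
  · intro i _ j _ hij
    simp only [Finset.disjoint_left, Finset.HasAntidiagonal.mem_antidiagonal]
    rintro a rfl h2; exact hij h2

/-- The "upper" triangle `{(b,c) ∈ [0,M]² : M+1 ≤ b + c}`. -/
def upF (M : ℕ) : Finset (ℕ × ℕ) :=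
  (Finset.range (M+1) ×ˢ Finset.range (M+1)).filter (fun p => ¬ p.1 + p.2 ≤ M)

lemma card_upF (M : ℕ) : 2 * (upF M).card = M * (M+1) := by
  have hsplit : (triF M).card + (upF M).card
      = ((Finset.range (M+1) ×ˢ Finset.range (M+1))).card :=
    Finset.card_filter_add_card_filter_not _
  have hc : (Finset.range (M+1) ×ˢ Finset.range (M+1)).card = (M+1) * (M+1) := by
    rw [Finset.card_product, Finset.card_range]
  have h2 := card_triF M
  nlinarith [hsplit, hc, h2]

/-- The top slice of `Dfin (n+2)`. -/
lemma card_slice (n : ℕ) :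
    2 * ((Dfin (n+2)).filter (fun p => p.1 + p.2.1 + p.2.2 = 2*n+3)).card
      = (n+1) * (n+2) := by
  have hbij : ((Dfin (n+2)).filter (fun p => p.1 + p.2.1 + p.2.2 = 2*n+3)).card
      = (upF (n+1)).card := by
    refine Finset.card_bij' (fun p _ => (p.2.1, p.2.2))
      (fun q _ => (2*n+3 - q.1 - q.2, q.1, q.2)) ?_ ?_ ?_ ?_
    · rintro ⟨a, b, c⟩ hp
      simp only [Finset.mem_filter, mem_Dfin] at hp
      simp only [upF, Finset.mem_filter, Finset.mem_product, Finset.mem_range]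
      omega
    · rintro ⟨b, c⟩ hq
      simp only [upF, Finset.mem_filter, Finset.mem_product, Finset.mem_range] at hq
      simp only [Finset.mem_filter, mem_Dfin]
      omega
    · rintro ⟨a, b, c⟩ hp
      simp only [Finset.mem_filter, mem_Dfin] at hp
      simp only [Prod.mk.injEq]
      exact ⟨by omega, trivial⟩
    · rintro ⟨b, c⟩ hq
      rfl
  rw [hbij]
  have h := card_upF (n+1)
  nlinarith [h]

lemma Dfin_card_rec (n : ℕ) :
    2 * (Dfin (n+2)).card = 2 * (Dfin n).card + (n+1) * (n+2) := by
  have hsplit : ((Dfin (n+2)).filter (fun p => p.1 + p.2.1 + p.2.2 ≤ 2*n+2)).card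
      + ((Dfin (n+2)).filter (fun p => ¬ p.1 + p.2.1 + p.2.2 ≤ 2*n+2)).card
      = (Dfin (n+2)).card := Finset.card_filter_add_card_filter_not _
  have hneg : ((Dfin (n+2)).filter (fun p => ¬ p.1 + p.2.1 + p.2.2 ≤ 2*n+2))
      = ((Dfin (n+2)).filter (fun p => p.1 + p.2.1 + p.2.2 = 2*n+3)) := by
    apply Finset.filter_congr
    intro x hx
    rw [mem_Dfin] at hx
    constructor <;> intro h <;> simp_all <;> omega
  have hlow : ((Dfin (n+2)).filter (fun p => p.1 + p.2.1 + p.2.2 ≤ 2*n+2)).card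
      = (Dfin n).card := by
    refine Finset.card_bij' (fun p _ => (p.1 - 1, p.2.1 - 1, p.2.2 - 1))
      (fun q _ => (q.1 + 1, q.2.1 + 1, q.2.2 + 1)) ?_ ?_ ?_ ?_
    · rintro ⟨a, b, c⟩ hp
      simp only [Finset.mem_filter, mem_Dfin] at hp
      simp only [mem_Dfin]
      omega
    · rintro ⟨a, b, c⟩ hq
      simp only [mem_Dfin] at hq
      simp only [Finset.mem_filter, mem_Dfin]
      omega
    · rintro ⟨a, b, c⟩ hp
      simp only [Finset.mem_filter, mem_Dfin] at hp
      simp only [Prod.mk.injEq]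
      omega
    · rintro ⟨a, b, c⟩ hq
      simp only [Prod.mk.injEq]
      omega
  have hs := card_slice n
  have := hneg ▸ hsplit
  linarith [hs, hlow, this]

lemma Dfin_one : (Dfin 1).card = 0 := by decide

lemma Dfin_two : (Dfin 2).card = 1 := by decide

lemma Dfin_bounds : ∀ n : ℕ, 1 ≤ n →
    n^3 ≤ 12 * (Dfin n).card + n^2 ∧ 12 * (Dfin n).card ≤ n^3 + 2*n^2 := by
  intro n
  induction n using Nat.strong_induction_on with
  | _ n ih =>
    intro hn
    match n, hn with
    | 1, _ => rw [Dfin_one]; omega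
    | 2, _ => rw [Dfin_two]; omega
    | (m+3), _ =>
      have ihm := ih (m+1) (by omega) (by omega)
      have hrec := Dfin_card_rec (m+1)
      constructor
      · nlinarith [ihm.1, hrec]
      · nlinarith [ihm.2, hrec]

/-- Arithmetic characterization of membership in `Iⁿ` for a monomial. -/
lemma arith_Ipow {n a b c : ℕ} :
    (∃ i j kk : ℕ, i + j + kk = n ∧ i + kk ≤ a ∧ i + j ≤ b ∧ j + kk ≤ c) ↔
      2*n ≤ min a n + min b n + min c n := by
  constructor
  · rintro ⟨i, j, kk, rfl, h1, h2, h3⟩; omega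
  · intro h
    exact ⟨n - min c n, n - (n - min c n) - (n - min b n), n - min b n,
      by omega, by omega, by omega, by omega⟩

lemma arith_torsion {n a b c p q r : ℕ}
    (ha : n ≤ min a n + min b n) (hb : n ≤ min b n + min c n)
    (hc : n ≤ min a n + min c n) (h : 3*n ≤ p + q + r) :
    2*n ≤ min (a+p) n + min (b+q) n + min (c+r) n := by omega

lemma arith_Q_diff {n a b c : ℕ}
    (ha : n ≤ min a n + min b n) (hb : n ≤ min b n + min c n)
    (hc : n ≤ min a n + min c n) (h : ¬ 2*n ≤ min a n + min b n + min c n) :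
    a ≤ n ∧ b ≤ n ∧ c ≤ n ∧ n ≤ a + b ∧ n ≤ b + c ∧ n ≤ a + c ∧ a + b + c < 2*n := by
  omega

end EpsAux



namespace EpsAux2
open MvPolynomial Pointwise

lemma arith_Ipow' {n a b c : ℕ} :
    (∃ i j kk : ℕ, i + j + kk = n ∧ i + kk ≤ a ∧ i + j ≤ b ∧ j + kk ≤ c) ↔
      2*n ≤ min a n + min b n + min c n := by
  constructor
  · rintro ⟨i, j, kk, rfl, h1, h2, h3⟩; omega
  · intro h
    exact ⟨n - min c n, n - (n - min c n) - (n - min b n), n - min b n,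
      by omega, by omega, by omega, by omega⟩

section Poly
variable {k : Type*} [Field k]

local notation "S" => MvPolynomial (Fin 3) k

noncomputable def ev (a b c : ℕ) : Fin 3 →₀ ℕ := Finsupp.equivFunOnFinite.symm ![a, b, c]

@[simp] lemma ev_app0 (a b c : ℕ) : ev a b c 0 = a := rfl
@[simp] lemma ev_app1 (a b c : ℕ) : ev a b c 1 = b := rfl
@[simp] lemma ev_app2 (a b c : ℕ) : ev a b c 2 = c := rfl

lemma ev_self (e : Fin 3 →₀ ℕ) : ev (e 0) (e 1) (e 2) = e := by
  ext i; fin_cases i <;> rfl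

lemma ev_add (a b c a' b' c' : ℕ) :
    ev a b c + ev a' b' c' = ev (a+a') (b+b') (c+c') := by
  ext i; fin_cases i <;> rfl

lemma ev_le {a b c : ℕ} {e : Fin 3 →₀ ℕ} :
    ev a b c ≤ e ↔ a ≤ e 0 ∧ b ≤ e 1 ∧ c ≤ e 2 := by
  rw [Finsupp.le_def]
  constructor
  · intro h; exact ⟨h 0, h 1, h 2⟩
  · rintro ⟨h0, h1, h2⟩ i; fin_cases i <;> assumption

def deg (e : Fin 3 →₀ ℕ) : ℕ := e 0 + e 1 + e 2

lemma deg_add (u v : Fin 3 →₀ ℕ) : deg (u + v) = deg u + deg v := by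
  simp only [deg, Finsupp.add_apply]; ring

lemma deg_pos {u : Fin 3 →₀ ℕ} (h : u ≠ 0) : 1 ≤ deg u := by
  by_contra hc
  apply h
  have h0 : u 0 = 0 ∧ u 1 = 0 ∧ u 2 = 0 := by unfold deg at hc; omega
  ext i; fin_cases i <;> simp [h0.1, h0.2.1, h0.2.2]

lemma eq_of_le_of_deg_le {u v : Fin 3 →₀ ℕ} (h : u ≤ v) (hd : deg v ≤ deg u) : u = v := by
  have := Finsupp.le_def.mp h
  have h0 := this 0; have h1 := this 1; have h2 := this 2
  unfold deg at hd
  have e0 : u 0 = v 0 := by omega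
  have e1 : u 1 = v 1 := by omega
  have e2 : u 2 = v 2 := by omega
  ext i; fin_cases i <;> [exact e0; exact e1; exact e2]

/-- The ideal generated by the monomials with exponents in `s`. -/
def spanMon (s : Set (Fin 3 →₀ ℕ)) : Ideal S :=
  Ideal.span ((fun e => (monomial e (1:k))) '' s)

lemma mem_spanMon {f : S} {s : Set (Fin 3 →₀ ℕ)} :
    f ∈ spanMon s ↔ ∀ e ∈ f.support, ∃ t ∈ s, t ≤ e :=
  MvPolynomial.mem_ideal_span_monomial_image

lemma mon_mem_spanMon {e : Fin 3 →₀ ℕ} {s : Set (Fin 3 →₀ ℕ)} :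
    (monomial e (1:k)) ∈ spanMon s ↔ ∃ t ∈ s, t ≤ e := by
  classical
  rw [mem_spanMon]
  constructor
  · intro h
    exact h e (by simp [MvPolynomial.support_monomial])
  · intro h e' he'
    rw [MvPolynomial.support_monomial] at he'
    simp only [if_neg (one_ne_zero (α := k)), Finset.mem_singleton] at he'
    subst he'; exact h

lemma spanMon_le_of {s t : Set (Fin 3 →₀ ℕ)}
    (h : ∀ e ∈ s, (monomial e (1:k)) ∈ spanMon t) : spanMon (k := k) s ≤ spanMon t := by
  rw [spanMon, Ideal.span_le]
  rintro x ⟨e, he, rfl⟩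
  exact h e he

/-- Monomial ideals are saturated with respect to polynomials with nonzero constant
coefficient. -/
lemma spanMon_saturated {s : Set (Fin 3 →₀ ℕ)} {g f : S}
    (hg : constantCoeff g ≠ 0) (h : g * f ∈ spanMon (k := k) s) : f ∈ spanMon s := by
  classical
  rw [mem_spanMon] at h ⊢
  by_contra hc
  push_neg at hc
  obtain ⟨e₁, he₁s, he₁⟩ := hc
  have hne : (f.support.filter (fun e => ¬ ∃ t ∈ s, t ≤ e)).Nonempty :=
    ⟨e₁, Finset.mem_filter.mpr ⟨he₁s, by push_neg; exact he₁⟩⟩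
  obtain ⟨e₀, he₀, hmin⟩ := Finset.exists_min_image _ deg hne
  rw [Finset.mem_filter] at he₀
  obtain ⟨he₀s, he₀nd⟩ := he₀
  have hcoeff : coeff e₀ (g * f) = 0 := by
    by_contra hcz
    obtain ⟨t, ht, hts⟩ := h e₀ (by rwa [MvPolynomial.mem_support_iff])
    exact he₀nd ⟨t, ht, hts⟩
  rw [MvPolynomial.coeff_mul] at hcoeff
  have hsum : ∑ x ∈ Finset.HasAntidiagonal.antidiagonal e₀, coeff x.1 g * coeff x.2 f
      = constantCoeff g * coeff e₀ f := by
    rw [Finset.sum_eq_single (0, e₀)]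
    · rw [constantCoeff_eq]
    · rintro ⟨u, v⟩ hmem hne'
      rw [Finset.HasAntidiagonal.mem_antidiagonal] at hmem
      have hu : u ≠ 0 := by
        rintro rfl
        exact hne' (by rw [Prod.mk.injEq]; exact ⟨rfl, by rw [← hmem, zero_add]⟩)
      by_contra hterm
      have hvf : v ∈ f.support := by
        rw [MvPolynomial.mem_support_iff]
        intro h0
        exact hterm (by rw [h0, mul_zero])
      have hvnd : ¬ ∃ t ∈ s, t ≤ v := by
        rintro ⟨t, ht, htv⟩
        exact he₀nd ⟨t, ht, le_trans htv (by rw [← hmem]; exact le_add_self)⟩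
      have hvmem : v ∈ f.support.filter (fun e => ¬ ∃ t ∈ s, t ≤ e) :=
        Finset.mem_filter.mpr ⟨hvf, by push_neg; push_neg at hvnd; exact hvnd⟩
      have := hmin v hvmem
      have hdeg : deg e₀ = deg u + deg v := by rw [← hmem, deg_add]
      have := deg_pos hu
      omega
    · intro habs
      exact absurd (Finset.HasAntidiagonal.mem_antidiagonal.mpr (zero_add e₀)) habs
  rw [hsum] at hcoeff
  rcases mul_eq_zero.mp hcoeff with h' | h'
  · exact hg h'
  · exact (MvPolynomial.mem_support_iff.mp he₀s) h'

/-- Generator exponents of `Iⁿ`. -/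
def P (n : ℕ) : Set (Fin 3 →₀ ℕ) :=
  {e | ∃ i j kk : ℕ, i + j + kk = n ∧ e = ev (i+kk) (i+j) (j+kk)}

/-- Exponents of the saturation. -/
def Q (n : ℕ) : Set (Fin 3 →₀ ℕ) :=
  {e | n ≤ min (e 0) n + min (e 1) n ∧ n ≤ min (e 1) n + min (e 2) n ∧
    n ≤ min (e 0) n + min (e 2) n}

def Mdeg (t : ℕ) : Set (Fin 3 →₀ ℕ) := {e | deg e = t}

lemma spanMon_mul (s t : Set (Fin 3 →₀ ℕ)) :
    spanMon (k := k) s * spanMon t = spanMon (s + t) := by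
  apply le_antisymm
  · rw [spanMon, spanMon, Ideal.span_mul_span, Ideal.span_le]
    intro x hx
    rw [Set.mem_mul] at hx
    obtain ⟨a, ⟨ea, hea, rfl⟩, b, ⟨eb, heb, rfl⟩, rfl⟩ := hx
    rw [monomial_mul, one_mul]
    apply Ideal.subset_span
    exact ⟨ea + eb, Set.add_mem_add hea heb, rfl⟩
  · refine Ideal.span_le.mpr ?_
    rintro x ⟨e, ⟨ea, hea, eb, heb, rfl⟩, rfl⟩
    dsimp only
    rw [← one_mul (1:k), ← monomial_mul]
    exact Ideal.mul_mem_mul (Ideal.subset_span ⟨ea, hea, rfl⟩)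
      (Ideal.subset_span ⟨eb, heb, rfl⟩)

lemma zero_mem_P0 : P 0 = {0} := by
  ext e
  simp only [P, Set.mem_setOf_eq, Set.mem_singleton_iff]
  constructor
  · rintro ⟨i, j, kk, hs, rfl⟩
    have hi : i = 0 := by omega
    have hj : j = 0 := by omega
    have hkk : kk = 0 := by omega
    subst hi; subst hj; subst hkk
    ext i; fin_cases i <;> rfl
  · rintro rfl
    exact ⟨0, 0, 0, rfl, by ext i; fin_cases i <;> rfl⟩

lemma spanMon_zero : spanMon (k := k) {0} = ⊤ := by
  rw [spanMon, Set.image_singleton]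
  have : (monomial (0 : Fin 3 →₀ ℕ) (1:k)) = 1 := by simp
  rw [this, Ideal.span_singleton_one]

lemma P_add (n : ℕ) : P 1 + P n = P (n+1) := by
  ext e
  constructor
  · rintro ⟨a, ⟨i1, j1, k1, hs1, rfl⟩, b, ⟨i2, j2, k2, hs2, rfl⟩, rfl⟩
    dsimp only
    rw [ev_add]
    exact ⟨i1+i2, j1+j2, k1+k2, by omega, by congr 1 <;> omega⟩
  · rintro ⟨i, j, kk, hs, rfl⟩
    have h3 : 1 ≤ i ∨ 1 ≤ j ∨ 1 ≤ kk := by omega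
    rcases h3 with h | h | h
    · refine ⟨ev 1 1 0, ⟨1, 0, 0, rfl, by congr 1⟩,
        ev (i-1+kk) (i-1+j) (j+kk), ⟨i-1, j, kk, by omega, rfl⟩, ?_⟩
      dsimp only; rw [ev_add]; congr 1 <;> omega
    · refine ⟨ev 0 1 1, ⟨0, 1, 0, rfl, by congr 1⟩,
        ev (i+kk) (i+(j-1)) ((j-1)+kk), ⟨i, j-1, kk, by omega, rfl⟩, ?_⟩
      dsimp only; rw [ev_add]; congr 1 <;> omega
    · refine ⟨ev 1 0 1, ⟨0, 0, 1, rfl, by congr 1⟩,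
        ev (i+(kk-1)) (i+j) (j+(kk-1)), ⟨i, j, kk-1, by omega, rfl⟩, ?_⟩
      dsimp only; rw [ev_add]; congr 1 <;> omega

lemma pIdeal_pow (n : ℕ) : (spanMon (k := k) (P 1)) ^ n = spanMon (P n) := by
  induction n with
  | zero => rw [pow_zero, zero_mem_P0, spanMon_zero]; exact Ideal.one_eq_top
  | succ m ih => rw [pow_succ, mul_comm, ih, spanMon_mul, P_add]

lemma Mdeg_zero : Mdeg 0 = {0} := by
  ext e
  simp only [Mdeg, Set.mem_setOf_eq, Set.mem_singleton_iff]
  constructor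
  · intro h
    have h' : e 0 = 0 ∧ e 1 = 0 ∧ e 2 = 0 := by unfold deg at h; omega
    ext i; fin_cases i <;> simp [h'.1, h'.2.1, h'.2.2]
  · rintro rfl; rfl

lemma Mdeg_add (t : ℕ) : Mdeg 1 + Mdeg t = Mdeg (t+1) := by
  ext e
  constructor
  · rintro ⟨a, ha, b, hb, rfl⟩
    simp only [Mdeg, Set.mem_setOf_eq] at *
    rw [deg_add, ha, hb]; omega
  · intro he
    simp only [Mdeg, Set.mem_setOf_eq] at he
    have h3 : 1 ≤ e 0 ∨ 1 ≤ e 1 ∨ 1 ≤ e 2 := by unfold deg at he; omega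
    have hev := ev_self e
    rcases h3 with h | h | h
    · refine ⟨ev 1 0 0, by simp [Mdeg, deg], ev (e 0 - 1) (e 1) (e 2),
        by simp [Mdeg, deg]; unfold deg at he; omega, ?_⟩
      dsimp only; rw [ev_add, ← hev]
      congr 1 <;> (try simp only [ev_app0, ev_app1, ev_app2]) <;> omega
    · refine ⟨ev 0 1 0, by simp [Mdeg, deg], ev (e 0) (e 1 - 1) (e 2),
        by simp [Mdeg, deg]; unfold deg at he; omega, ?_⟩
      dsimp only; rw [ev_add, ← hev]
      congr 1 <;> (try simp only [ev_app0, ev_app1, ev_app2]) <;> omega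
    · refine ⟨ev 0 0 1, by simp [Mdeg, deg], ev (e 0) (e 1) (e 2 - 1),
        by simp [Mdeg, deg]; unfold deg at he; omega, ?_⟩
      dsimp only; rw [ev_add, ← hev]
      congr 1 <;> (try simp only [ev_app0, ev_app1, ev_app2]) <;> omega

lemma single_ev0 : Finsupp.single (0 : Fin 3) 1 = ev 1 0 0 := by
  ext j; fin_cases j <;> simp [Finsupp.single_apply]
lemma single_ev1 : Finsupp.single (1 : Fin 3) 1 = ev 0 1 0 := by
  ext j; fin_cases j <;> simp [Finsupp.single_apply]
lemma single_ev2 : Finsupp.single (2 : Fin 3) 1 = ev 0 0 1 := by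
  ext j; fin_cases j <;> simp [Finsupp.single_apply]

lemma mvMax_eq_spanMon : mvMax k 3 = spanMon (Mdeg 1) := by
  rw [mvMax, spanMon]
  congr 1
  ext p
  simp only [Set.mem_range, Set.mem_image]
  constructor
  · rintro ⟨i, rfl⟩
    refine ⟨Finsupp.single i 1, ?_, rfl⟩
    simp only [Mdeg, Set.mem_setOf_eq, deg]
    fin_cases i <;> simp [Finsupp.single_apply]
  · rintro ⟨e, he, rfl⟩
    simp only [Mdeg, Set.mem_setOf_eq, deg] at he
    have h3 : (e 0 = 1 ∧ e 1 = 0 ∧ e 2 = 0) ∨ (e 0 = 0 ∧ e 1 = 1 ∧ e 2 = 0) ∨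
        (e 0 = 0 ∧ e 1 = 0 ∧ e 2 = 1) := by omega
    have hev := ev_self e
    rcases h3 with ⟨h0, h1, h2⟩ | ⟨h0, h1, h2⟩ | ⟨h0, h1, h2⟩
    · exact ⟨0, by rw [show (X (0 : Fin 3) : S) = monomial (Finsupp.single (0 : Fin 3) 1) 1
        from rfl, single_ev0, ← hev, h0, h1, h2]⟩
    · exact ⟨1, by rw [show (X (1 : Fin 3) : S) = monomial (Finsupp.single (1 : Fin 3) 1) 1
        from rfl, single_ev1, ← hev, h0, h1, h2]⟩
    · exact ⟨2, by rw [show (X (2 : Fin 3) : S) = monomial (Finsupp.single (2 : Fin 3) 1) 1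
        from rfl, single_ev2, ← hev, h0, h1, h2]⟩

lemma mvMax_pow (t : ℕ) : (mvMax k 3) ^ t = spanMon (Mdeg t) := by
  induction t with
  | zero => rw [pow_zero, Mdeg_zero, spanMon_zero]; exact Ideal.one_eq_top
  | succ m ih => rw [pow_succ, mul_comm, ih, ← Mdeg_add, ← spanMon_mul, mvMax_eq_spanMon]

lemma mon_mem_P_iff {e : Fin 3 →₀ ℕ} {n : ℕ} :
    (monomial e (1:k)) ∈ spanMon (P n) ↔
      2*n ≤ min (e 0) n + min (e 1) n + min (e 2) n := by
  rw [mon_mem_spanMon, ← arith_Ipow']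
  constructor
  · rintro ⟨t, ⟨i, j, kk, hs, rfl⟩, hle⟩
    rw [ev_le] at hle
    exact ⟨i, j, kk, hs, hle.1, hle.2.1, hle.2.2⟩
  · rintro ⟨i, j, kk, hs, h1, h2, h3⟩
    exact ⟨ev (i+kk) (i+j) (j+kk), ⟨i, j, kk, hs, rfl⟩, ev_le.mpr ⟨h1, h2, h3⟩⟩

lemma mem_spanMon_Q {f : S} {n : ℕ} :
    f ∈ spanMon (k := k) (Q n) ↔ ∀ e ∈ f.support, e ∈ Q n := by
  rw [mem_spanMon]
  constructor
  · intro h e he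
    obtain ⟨t, ht, hte⟩ := h e he
    obtain ⟨h1, h2, h3⟩ := ht
    have := Finsupp.le_def.mp hte
    have g0 := this 0; have g1 := this 1; have g2 := this 2
    exact ⟨by omega, by omega, by omega⟩
  · intro h e he
    exact ⟨e, h e he, le_refl e⟩

lemma torsion_mul (n : ℕ) :
    spanMon (k := k) (Mdeg (3*n)) * spanMon (Q n) ≤ spanMon (P n) := by
  rw [spanMon_mul]
  apply spanMon_le_of
  rintro e ⟨d, hd, q, hq, rfl⟩
  rw [mon_mem_P_iff]
  obtain ⟨h1, h2, h3⟩ := hq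
  simp only [Mdeg, Set.mem_setOf_eq, deg] at hd
  simp only [Finsupp.add_apply]
  have : 2*n ≤ min (q 0 + d 0) n + min (q 1 + d 1) n + min (q 2 + d 2) n := by omega
  omega

end Poly
end EpsAux2



namespace EpsAux2
open MvPolynomial Pointwise EpsAux

section Loc
variable {k : Type*} [Field k]

local notation "S" => MvPolynomial (Fin 3) k
local notation "RR" => Localization.AtPrime (mvMax k 3)
local notation "al" => algebraMap (MvPolynomial (Fin 3) k) (Localization.AtPrime (mvMax k 3))

lemma primeCompl_le_nzd : (mvMax k 3).primeCompl ≤ nonZeroDivisors S :=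
  fun x hx => mem_nonZeroDivisors_of_ne_zero
    (fun h0 => hx (by rw [h0]; exact (mvMax k 3).zero_mem))

lemma al_injective : Function.Injective al :=
  IsLocalization.injective (Localization.AtPrime (mvMax k 3)) primeCompl_le_nzd

lemma constantCoeff_ne_zero_of_compl {s : S} (hs : s ∈ (mvMax k 3).primeCompl) :
    constantCoeff s ≠ 0 := by
  intro h0
  exact hs (by rw [mvMax_eq_ker]; exact h0)

/-- Contraction of an extended monomial ideal. -/
lemma map_spanMon_contract {s : Set (Fin 3 →₀ ℕ)} {f : S}
    (h : al f ∈ (spanMon (k := k) s).map al) : f ∈ spanMon s := by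
  rw [IsLocalization.mem_map_algebraMap_iff (mvMax k 3).primeCompl] at h
  obtain ⟨⟨a, d⟩, heq⟩ := h
  have h2 : f * (d : S) = (a : S) := al_injective (by rw [map_mul]; exact heq)
  apply spanMon_saturated (g := (d : S)) (constantCoeff_ne_zero_of_compl d.2)
  rw [mul_comm, h2]
  exact a.2

lemma al_mem_map_iff {s : Set (Fin 3 →₀ ℕ)} {f : S} :
    al f ∈ (spanMon (k := k) s).map al ↔ f ∈ spanMon s :=
  ⟨map_spanMon_contract, fun h => Ideal.mem_map_of_mem al h⟩

/-- The extension of `Iⁿ` to the localization. -/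
noncomputable def Jn (n : ℕ) : Ideal (Localization.AtPrime (mvMax k 3)) :=
  (spanMon (k := k) (P n)).map al

/-- The class of a polynomial in `R ⧸ Iⁿ`. -/
noncomputable def cls (n : ℕ) (f : S) :
    Localization.AtPrime (mvMax k 3) ⧸ Jn (k := k) n :=
  Submodule.mkQ (Jn (k := k) n) (al f)

lemma maximalIdeal_eq :
    IsLocalRing.maximalIdeal (Localization.AtPrime (mvMax k 3)) = (mvMax k 3).map al :=
  (Localization.AtPrime.map_eq_maximalIdeal).symm

lemma maximalIdeal_pow_eq (t : ℕ) :
    (IsLocalRing.maximalIdeal (Localization.AtPrime (mvMax k 3))) ^ t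
      = (spanMon (k := k) (Mdeg t)).map al := by
  rw [maximalIdeal_eq, ← Ideal.map_pow, mvMax_pow]

/-- Multiplying a saturation monomial by the `3n`-th power of the maximal ideal lands
in `Iⁿ`. -/
lemma smul_mem_Jn {n : ℕ} {e : Fin 3 →₀ ℕ} (he : e ∈ Q n)
    {x : Localization.AtPrime (mvMax k 3)}
    (hx : x ∈ (IsLocalRing.maximalIdeal (Localization.AtPrime (mvMax k 3))) ^ (3*n)) :
    x * al (monomial e 1) ∈ Jn (k := k) n := by
  rw [maximalIdeal_pow_eq] at hx
  have h1 : x * al (monomial e 1) ∈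
      ((spanMon (k := k) (Mdeg (3*n))).map al) * ((spanMon (k := k) (Q n)).map al) := by
    apply Ideal.mul_mem_mul hx
    exact Ideal.mem_map_of_mem al (mon_mem_spanMon.mpr ⟨e, he, le_refl e⟩)
  rw [← Ideal.map_mul] at h1
  unfold Jn
  exact Ideal.map_mono (torsion_mul n) h1

lemma cls_mem_H0 {n : ℕ} {e : Fin 3 →₀ ℕ} (he : e ∈ Q n) :
    cls n (monomial e 1) ∈
      H0 (IsLocalRing.maximalIdeal (Localization.AtPrime (mvMax k 3)))
        (Localization.AtPrime (mvMax k 3) ⧸ Jn (k := k) n) := by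
  apply Submodule.mem_iSup_of_mem (3*n)
  rw [Submodule.mem_torsionBySet_iff]
  rintro ⟨a, ha⟩
  have : a • cls n (monomial e 1) = Submodule.mkQ (Jn (k := k) n) (a * al (monomial e 1)) := by
    unfold cls
    rw [← _root_.map_smul]; rfl
  rw [this, Submodule.mkQ_apply, Submodule.Quotient.mk_eq_zero]
  exact smul_mem_Jn he ha

/-- The subideals giving the chain. -/
noncomputable def KE (n : ℕ) (E : Finset (Fin 3 →₀ ℕ)) :
    Ideal (Localization.AtPrime (mvMax k 3)) := (spanMon (k := k) (P n ∪ ↑E)).map al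

noncomputable def cE (n : ℕ) (E : Finset (Fin 3 →₀ ℕ)) :
    Submodule (Localization.AtPrime (mvMax k 3))
      (Localization.AtPrime (mvMax k 3) ⧸ Jn (k := k) n) :=
  Submodule.map (Submodule.mkQ (Jn (k := k) n)) (KE (k := k) n E)

lemma spanMon_mono {s t : Set (Fin 3 →₀ ℕ)} (h : s ⊆ t) :
    spanMon (k := k) s ≤ spanMon t :=
  Ideal.span_mono (Set.image_mono h)

lemma Jn_le_KE (n : ℕ) (E : Finset (Fin 3 →₀ ℕ)) : Jn (k := k) n ≤ KE (k := k) n E := by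
  unfold Jn KE
  exact Ideal.map_mono (spanMon_mono Set.subset_union_left)

lemma cE_mono {n : ℕ} {E F : Finset (Fin 3 →₀ ℕ)} (h : E ⊆ F) :
    cE (k := k) n E ≤ cE (k := k) n F := by
  unfold cE KE
  exact Submodule.map_mono (Ideal.map_mono (spanMon_mono
    (Set.union_subset_union_right _ (fun x hx => h hx))))

/-- The exponent set corresponding to `Dfin`. -/
def Dset (n : ℕ) : Set (Fin 3 →₀ ℕ) :=
  {e | e 0 ≤ n ∧ e 1 ≤ n ∧ e 2 ≤ n ∧ n ≤ e 0 + e 1 ∧ n ≤ e 1 + e 2 ∧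
    n ≤ e 0 + e 2 ∧ e 0 + e 1 + e 2 < 2*n}

lemma Dset_subset_Q {n : ℕ} : Dset n ⊆ Q n := by
  rintro e ⟨h0, h1, h2, h3, h4, h5, h6⟩
  exact ⟨by omega, by omega, by omega⟩

lemma mon_not_mem_P_of_Dset {n : ℕ} {e : Fin 3 →₀ ℕ} (he : e ∈ Dset n) :
    (monomial e (1:k)) ∉ spanMon (P n) := by
  rw [mon_mem_P_iff]
  obtain ⟨h0, h1, h2, h3, h4, h5, h6⟩ := he
  omega

lemma cls_mem_cE {n : ℕ} {E : Finset (Fin 3 →₀ ℕ)} {e : Fin 3 →₀ ℕ} (he : e ∈ E) :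
    cls n (monomial e 1) ∈ cE (k := k) n E := by
  unfold cls cE KE
  apply Submodule.mem_map_of_mem
  exact Ideal.mem_map_of_mem al (mon_mem_spanMon.mpr ⟨e, Or.inr he, le_refl e⟩)

lemma cls_not_mem_cE {n : ℕ} {E : Finset (Fin 3 →₀ ℕ)} {e : Fin 3 →₀ ℕ}
    (heD : e ∈ Dset n) (hE : ∀ t ∈ E, t ≤ e → t = e) (heE : e ∉ E) :
    cls n (monomial e 1) ∉ cE (k := k) n E := by
  intro hmem
  unfold cls cE at hmem
  obtain ⟨w, hw, hweq⟩ := Submodule.mem_map.mp hmem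
  have hdiff : al (monomial e 1) - w ∈ Jn (k := k) n := by
    rw [← Submodule.Quotient.eq (Jn (k := k) n)]
    exact hweq.symm
  have hmem2 : al (monomial e 1) ∈ KE (k := k) n E :=
    sub_add_cancel (al (monomial e 1)) w ▸
      Ideal.add_mem _ (Jn_le_KE n E hdiff) hw
  have hS : (monomial e (1:k)) ∈ spanMon (P n ∪ ↑E) := map_spanMon_contract hmem2
  obtain ⟨t, ht, hte⟩ := mon_mem_spanMon.mp hS
  rcases ht with ht | ht
  · exact mon_not_mem_P_of_Dset (k := k) heD (mon_mem_spanMon.mpr ⟨t, ht, hte⟩)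
  · exact heE (hE t ht hte ▸ ht)

/-- `cE` grows strictly when adding a minimal-degree element. -/
lemma chain_exists (n : ℕ) : ∀ (m : ℕ) (E : Finset (Fin 3 →₀ ℕ)), E.card = m →
    ↑E ⊆ Dset n →
    ∃ s : LTSeries (Submodule (Localization.AtPrime (mvMax k 3))
      (Localization.AtPrime (mvMax k 3) ⧸ Jn (k := k) n)),
      s.length = E.card ∧ s.last = cE (k := k) n E := by
  intro m
  induction m with
  | zero =>
    intro E hcard _
    exact ⟨RelSeries.singleton _ (cE (k := k) n E), by simp [RelSeries.singleton, hcard], rfl⟩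
  | succ m ih =>
    intro E hcard hED
    have hne : E.Nonempty := Finset.card_pos.mp (by omega)
    obtain ⟨e, heE, hemin⟩ := Finset.exists_min_image E deg hne
    have heD : e ∈ Dset n := hED heE
    set E' := E.erase e with hE'
    have hcard' : E'.card = m := by
      rw [hE', Finset.card_erase_of_mem heE, hcard]; omega
    obtain ⟨s, hslen, hslast⟩ := ih E' hcard' (fun t ht => hED (Finset.erase_subset _ _ ht))
    have hlt : cE (k := k) n E' < cE (k := k) n E := by
      apply lt_of_le_of_ne (cE_mono (k := k) (Finset.erase_subset _ _))
      intro hEq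
      apply cls_not_mem_cE (k := k) heD
        (fun t ht hte => eq_of_le_of_deg_le hte (hemin t (Finset.mem_of_mem_erase ht)))
        (Finset.notMem_erase e E)
      rw [hEq]
      exact cls_mem_cE heE
    refine ⟨s.snoc (cE (k := k) n E) (hslast ▸ hlt), ?_, RelSeries.last_snoc _ _ _⟩
    show s.length + 1 = E.card
    omega
lemma cls_zero_of_P {n : ℕ} {e : Fin 3 →₀ ℕ} (he : e ∈ P n) :
    cls (k := k) n (monomial e 1) = 0 := by
  unfold cls
  rw [Submodule.mkQ_apply, Submodule.Quotient.mk_eq_zero]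
  exact Ideal.mem_map_of_mem al (mon_mem_spanMon.mpr ⟨e, he, le_refl e⟩)

lemma cE_le_H0 {n : ℕ} {E : Finset (Fin 3 →₀ ℕ)} (hE : ↑E ⊆ Q n) :
    cE (k := k) n E ≤ H0 (IsLocalRing.maximalIdeal (Localization.AtPrime (mvMax k 3)))
      (Localization.AtPrime (mvMax k 3) ⧸ Jn (k := k) n) := by
  unfold cE KE spanMon
  rw [Ideal.map_span, ← Ideal.submodule_span_eq, Submodule.map_span, Submodule.span_le]
  rintro x ⟨y, ⟨z, ⟨e, he, rfl⟩, rfl⟩, rfl⟩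
  rcases he with he | he
  · have : Submodule.mkQ (Jn (k := k) n) (al (monomial e 1)) = 0 := cls_zero_of_P he
    rw [this]
    exact Submodule.zero_mem _
  · exact cls_mem_H0 (hE he)

/-- The exponent version of `Dfin`. -/
noncomputable def DfinE (n : ℕ) : Finset (Fin 3 →₀ ℕ) :=
  (Dfin n).image (fun p => ev p.1 p.2.1 p.2.2)

lemma card_DfinE (n : ℕ) : (DfinE n).card = (Dfin n).card := by
  apply Finset.card_image_of_injOn
  intro p _ q _ h
  have h0 := congrArg (fun u : Fin 3 →₀ ℕ => u 0) h
  have h1 := congrArg (fun u : Fin 3 →₀ ℕ => u 1) h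
  have h2 := congrArg (fun u : Fin 3 →₀ ℕ => u 2) h
  simp only [ev_app0, ev_app1, ev_app2] at h0 h1 h2
  exact Prod.ext h0 (Prod.ext h1 h2)

lemma DfinE_subset_Dset {n : ℕ} : ↑(DfinE n) ⊆ Dset n := by
  intro e he
  rw [DfinE, Finset.coe_image] at he
  obtain ⟨p, hp, rfl⟩ := he
  rw [Finset.mem_coe, mem_Dfin] at hp
  simp only [Dset, Set.mem_setOf_eq, ev_app0, ev_app1, ev_app2]
  omega

/-- Lower bound on the length of `H⁰`. -/
lemma length_lower (n : ℕ) :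
    ((Dfin n).card : ENNReal) ≤ moduleLength (Localization.AtPrime (mvMax k 3))
      ↥(H0 (IsLocalRing.maximalIdeal (Localization.AtPrime (mvMax k 3)))
        (Localization.AtPrime (mvMax k 3) ⧸ Jn (k := k) n)) := by
  obtain ⟨s, hslen, hslast⟩ := chain_exists (k := k) n (DfinE n).card (DfinE n) rfl
    DfinE_subset_Dset
  have hlastle : s.last ≤ H0 (IsLocalRing.maximalIdeal (Localization.AtPrime (mvMax k 3)))
      (Localization.AtPrime (mvMax k 3) ⧸ Jn (k := k) n) := by
    rw [hslast]
    exact cE_le_H0 (le_trans DfinE_subset_Dset Dset_subset_Q)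
  have hle : ∀ i, s.toFun i ≤ H0 (IsLocalRing.maximalIdeal (Localization.AtPrime (mvMax k 3)))
      (Localization.AtPrime (mvMax k 3) ⧸ Jn (k := k) n) :=
    fun i => le_trans (s.monotone (Fin.le_last i)) hlastle
  set H := H0 (IsLocalRing.maximalIdeal (Localization.AtPrime (mvMax k 3)))
      (Localization.AtPrime (mvMax k 3) ⧸ Jn (k := k) n)
  let t : LTSeries (Submodule (Localization.AtPrime (mvMax k 3)) ↥H) :=
    { length := s.length
      toFun := fun i => (Submodule.MapSubtype.orderIso H).symm ⟨s.toFun i, hle i⟩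
      step := fun i => (Submodule.MapSubtype.orderIso H).symm.strictMono
        (Subtype.mk_lt_mk.mpr (s.step i)) }
  rw [moduleLength]
  refine le_iSup_of_le t ?_
  have : t.length = (Dfin n).card := by
    show s.length = _
    rw [hslen, card_DfinE]
  rw [this]

end Loc
end EpsAux2



namespace EpsAux2
open MvPolynomial Pointwise EpsAux

section Upper
variable {k : Type*} [Field k]

local notation "S" => MvPolynomial (Fin 3) k
local notation "RR" => Localization.AtPrime (mvMax k 3)
local notation "al" => algebraMap (MvPolynomial (Fin 3) k) (Localization.AtPrime (mvMax k 3))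

-- instances sanity check
example (n : ℕ) : IsScalarTower k (Localization.AtPrime (mvMax k 3))
    (Localization.AtPrime (mvMax k 3) ⧸ Jn (k := k) n) := inferInstance
example (n : ℕ) : SMulCommClass k (Localization.AtPrime (mvMax k 3))
    (Localization.AtPrime (mvMax k 3) ⧸ Jn (k := k) n) := inferInstance

lemma cls_add (n : ℕ) (f g : S) :
    cls (k := k) n (f + g) = cls n f + cls n g := by
  unfold cls; rw [map_add, map_add]

lemma cls_smul (n : ℕ) (c : k) (q : S) :
    cls (k := k) n (c • q) = c • cls n q := by
  unfold cls
  rw [Algebra.smul_def, map_mul, ← IsScalarTower.algebraMap_apply k S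
    (Localization.AtPrime (mvMax k 3)), ← Algebra.smul_def]
  rw [← algebraMap_smul (Localization.AtPrime (mvMax k 3)) c
    (algebraMap (MvPolynomial (Fin 3) k) (Localization.AtPrime (mvMax k 3)) q),
    _root_.map_smul, algebraMap_smul]

lemma cls_zero_of_mem {n : ℕ} {f : S} (hf : f ∈ spanMon (k := k) (P n)) :
    cls (k := k) n f = 0 := by
  unfold cls
  rw [Submodule.mkQ_apply, Submodule.Quotient.mk_eq_zero]
  exact Ideal.mem_map_of_mem al hf

/-- The `k`-span of the classes of monomials in the difference region. -/
noncomputable def Wspan (k : Type*) [Field k] (n : ℕ) :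
    Submodule k (Localization.AtPrime (mvMax k 3) ⧸ Jn (k := k) n) :=
  Submodule.span k ((fun e => cls (k := k) n (monomial e 1)) '' ↑(DfinE n))

lemma Dset_eq_DfinE (n : ℕ) : Dset n = ↑(DfinE n) := by
  apply Set.Subset.antisymm
  · intro e he
    rw [DfinE, Finset.coe_image]
    refine ⟨(e 0, e 1, e 2), ?_, ev_self e⟩
    rw [Finset.mem_coe, mem_Dfin]
    obtain ⟨h0, h1, h2, h3, h4, h5, h6⟩ := he
    exact ⟨h0, h1, h2, h3, h4, h5, h6⟩
  · exact DfinE_subset_Dset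

/-- Classes of saturation elements lie in `Wspan`. -/
lemma satClass {n : ℕ} {p : S} (hp : p ∈ spanMon (k := k) (Q n)) :
    cls (k := k) n p ∈ Wspan k n := by
  classical
  rw [show p = ∑ e ∈ p.support, monomial e (coeff e p) from (as_sum p)]
  rw [show cls (k := k) n (∑ e ∈ p.support, monomial e (coeff e p))
      = ∑ e ∈ p.support, cls (k := k) n (monomial e (coeff e p)) by
    unfold cls; rw [map_sum, map_sum]]
  apply Submodule.sum_mem
  intro e he
  have heQ : e ∈ Q n := mem_spanMon_Q.mp hp e he
  by_cases hcap : 2*n ≤ min (e 0) n + min (e 1) n + min (e 2) n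
  · have : (monomial e (coeff e p) : S) ∈ spanMon (k := k) (P n) := by
      have h1 : (monomial e (1:k)) ∈ spanMon (k := k) (P n) := mon_mem_P_iff.mpr hcap
      have h2 : (monomial e (coeff e p) : S) = C (coeff e p) * monomial e 1 := by
        rw [C_mul_monomial, mul_one]
      rw [h2]
      exact Ideal.mul_mem_left _ _ h1
    rw [cls_zero_of_mem this]
    exact Submodule.zero_mem _
  · have heD : e ∈ Dset n := by
      obtain ⟨h1, h2, h3⟩ := heQ
      exact arith_Q_diff h1 h2 h3 hcap
    have : (monomial e (coeff e p) : S) = (coeff e p) • monomial e 1 := by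
      rw [smul_monomial, smul_eq_mul, mul_one]
    rw [this, cls_smul]
    apply Submodule.smul_mem
    apply Submodule.subset_span
    rw [← Dset_eq_DfinE] at *
    exact ⟨e, heD, rfl⟩

/-- `f * p` stays in the saturation for `p` in the saturation. -/
lemma mul_mem_Q {n : ℕ} (f : S) {p : S} (hp : p ∈ spanMon (k := k) (Q n)) :
    f * p ∈ spanMon (k := k) (Q n) := Ideal.mul_mem_left _ f hp

/-- Key step: scaling a saturation class by an element of the localization stays in
`Wspan`. -/
lemma smul_satClass {n : ℕ} (r : Localization.AtPrime (mvMax k 3)) {p : S}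
    (hp : p ∈ spanMon (k := k) (Q n)) : r • cls (k := k) n p ∈ Wspan k n := by
  obtain ⟨⟨f, d⟩, hfd⟩ := IsLocalization.mk'_surjective (mvMax k 3).primeCompl r
  dsimp only at hfd
  set c : k := constantCoeff (d : S) with hc
  have hc0 : c ≠ 0 := constantCoeff_ne_zero_of_compl d.2
  set y : S := C c - (d : S) with hy
  have hymem : y ∈ mvMax k 3 := by
    rw [mvMax_eq_ker]
    show constantCoeff (C c - (d : S)) = 0
    rw [map_sub, constantCoeff_C]
    exact sub_eq_zero_of_eq rfl
  set N := 3*n with hN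
  set tp : S := ∑ i ∈ Finset.range N, (C c) ^ i * y ^ (N - 1 - i) with htp
  have hgeom : tp * ((d : S)) = C (c ^ N) - y ^ N := by
    have h1 : tp * (C c - y) = (C c) ^ N - y ^ N := geom_sum₂_mul (C c) y N
    have h2 : C c - y = (d : S) := by rw [hy]; ring
    rw [← h2, h1, map_pow]
  have hyN : ∀ q ∈ spanMon (k := k) (Q n), y ^ N * q ∈ spanMon (k := k) (P n) := by
    intro q hq
    apply torsion_mul n
    apply Ideal.mul_mem_mul _ hq
    rw [← mvMax_pow, hN]
    exact Ideal.pow_mem_pow hymem N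
  -- the unit
  have hu : IsUnit (al (d : S)) := IsLocalization.map_units _ d
  -- the main identity
  have hkey : r • cls (k := k) n p = (c ^ N)⁻¹ • cls (k := k) n (tp * (f * p)) := by
    apply (IsUnit.smul_left_cancel hu).mp
    have hL : al (d : S) • (r • cls (k := k) n p) = cls (k := k) n (f * p) := by
      rw [smul_smul]
      have : al (d : S) * r = al f := by
        rw [← hfd, mul_comm]
        exact IsLocalization.mk'_spec _ f d
      rw [this]
      unfold cls
      rw [← _root_.map_smul, smul_eq_mul, ← map_mul]
    have hR : al (d : S) • ((c ^ N)⁻¹ • cls (k := k) n (tp * (f * p)))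
        = cls (k := k) n (f * p) := by
      rw [smul_comm]
      have h3 : al (d : S) • cls (k := k) n (tp * (f * p))
          = cls (k := k) n ((d : S) * (tp * (f * p))) := by
        unfold cls
        rw [← _root_.map_smul, smul_eq_mul, ← map_mul]
      rw [h3]
      have h4 : (d : S) * (tp * (f * p)) = (C (c ^ N) - y ^ N) * (f * p) := by
        rw [← hgeom]; ring
      rw [h4, sub_mul, show cls (k := k) n ((C (c ^ N)) * (f * p) - y ^ N * (f * p))
          = cls (k := k) n ((C (c ^ N)) * (f * p)) - cls (k := k) n (y ^ N * (f * p)) by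
        unfold cls; rw [map_sub, map_sub]]
      rw [cls_zero_of_mem (hyN _ (mul_mem_Q f hp)), sub_zero]
      rw [show (C (c ^ N) : S) * (f * p) = (c ^ N) • (f * p) by
        rw [Algebra.smul_def]; rfl]
      rw [cls_smul, smul_smul, inv_mul_cancel₀ (pow_ne_zero N hc0), one_smul]
    rw [hL, hR]
  rw [hkey]
  apply Submodule.smul_mem
  exact satClass (mul_mem_Q tp (mul_mem_Q f hp))

/-- `Wspan` is stable under the action of the localization. -/
lemma Wspan_smul {n : ℕ} (r : Localization.AtPrime (mvMax k 3))
    {w : Localization.AtPrime (mvMax k 3) ⧸ Jn (k := k) n} (hw : w ∈ Wspan k n) :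
    r • w ∈ Wspan k n := by
  induction hw using Submodule.span_induction with
  | mem x hx =>
    obtain ⟨e, he, rfl⟩ := hx
    have heQ : e ∈ Q n := Dset_subset_Q (by rw [Dset_eq_DfinE]; exact he)
    exact smul_satClass r (mon_mem_spanMon.mpr ⟨e, heQ, le_refl e⟩)
  | zero => rw [smul_zero]; exact Submodule.zero_mem _
  | add x y _ _ hx hy => rw [smul_add]; exact Submodule.add_mem _ hx hy
  | smul a x _ hx => rw [smul_comm]; exact Submodule.smul_mem _ a hx

/-- `Wspan` as an `R`-submodule. -/
noncomputable def WR (k : Type*) [Field k] (n : ℕ) :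
    Submodule (Localization.AtPrime (mvMax k 3))
      (Localization.AtPrime (mvMax k 3) ⧸ Jn (k := k) n) where
  carrier := Wspan k n
  add_mem' := fun ha hb => Submodule.add_mem _ ha hb
  zero_mem' := Submodule.zero_mem _
  smul_mem' := fun r _ h => Wspan_smul r h

/-- Membership in `H⁰` gives a torsion exponent. -/
lemma exists_torsion_exp {n : ℕ}
    {x : Localization.AtPrime (mvMax k 3) ⧸ Jn (k := k) n}
    (hx : x ∈ H0 (IsLocalRing.maximalIdeal (Localization.AtPrime (mvMax k 3)))
      (Localization.AtPrime (mvMax k 3) ⧸ Jn (k := k) n)) :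
    ∃ t : ℕ, ∀ a ∈ (IsLocalRing.maximalIdeal (Localization.AtPrime (mvMax k 3))) ^ t,
      a • x = 0 := by
  have hdir : Directed (fun x1 x2 => x1 ≤ x2)
      (fun t : ℕ => Submodule.torsionBySet (Localization.AtPrime (mvMax k 3))
        (Localization.AtPrime (mvMax k 3) ⧸ Jn (k := k) n)
        ((IsLocalRing.maximalIdeal (Localization.AtPrime (mvMax k 3)) ^ t : Ideal _) : Set _)) := by
    intro a b
    refine ⟨max a b, ?_, ?_⟩ <;>
      exact Submodule.torsionBySet_le_torsionBySet_of_subset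
        (Ideal.pow_le_pow_right (by omega))
  rw [H0] at hx
  have hco := Submodule.coe_iSup_of_directed _ hdir
  have hx2 : x ∈ (↑(⨆ t, Submodule.torsionBySet (Localization.AtPrime (mvMax k 3))
      (Localization.AtPrime (mvMax k 3) ⧸ Jn (k := k) n)
      ((IsLocalRing.maximalIdeal (Localization.AtPrime (mvMax k 3)) ^ t : Ideal _) : Set _)) :
      Set _) := hx
  rw [hco] at hx2
  obtain ⟨t, ht⟩ := Set.mem_iUnion.mp hx2
  refine ⟨t, ?_⟩
  intro a ha
  have := (Submodule.mem_torsionBySet_iff _ _).mp ht ⟨a, ha⟩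
  exact this

lemma axis_monomials_mem (t : ℕ) :
    (monomial (ev t 0 0) (1:k)) ∈ spanMon (Mdeg t) ∧
    (monomial (ev 0 t 0) (1:k)) ∈ spanMon (Mdeg t) ∧
    (monomial (ev 0 0 t) (1:k)) ∈ spanMon (Mdeg t) := by
  refine ⟨?_, ?_, ?_⟩ <;>
    exact mon_mem_spanMon.mpr ⟨_, by simp [Mdeg, deg], le_refl _⟩

set_option maxHeartbeats 2000000 in
/-- `H⁰ ≤ WR`. -/
lemma H0_le_WR (n : ℕ) :
    H0 (IsLocalRing.maximalIdeal (Localization.AtPrime (mvMax k 3)))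
      (Localization.AtPrime (mvMax k 3) ⧸ Jn (k := k) n) ≤ WR k n := by
  intro x hx
  obtain ⟨t, ht⟩ := exists_torsion_exp hx
  obtain ⟨r, rfl⟩ := Submodule.mkQ_surjective (Jn (k := k) n) x
  obtain ⟨⟨f, d⟩, hfd⟩ := IsLocalization.mk'_surjective (mvMax k 3).primeCompl r
  dsimp only at hfd
  -- the three axis conditions
  have key : ∀ e₀ : Fin 3 →₀ ℕ, ∀ g : Fin 3 →₀ ℕ, deg g = t →
      (monomial g (1:k) * f) ∈ spanMon (P n) ∨ True := fun _ _ _ => Or.inr trivial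
  have haxis : ∀ g : Fin 3 →₀ ℕ, deg g = t → (monomial g (1:k) * f) ∈ spanMon (P n) := by
    intro g hg
    have hmem : al (monomial g (1:k)) ∈
        (IsLocalRing.maximalIdeal (Localization.AtPrime (mvMax k 3))) ^ t := by
      rw [maximalIdeal_pow_eq]
      exact Ideal.mem_map_of_mem al (mon_mem_spanMon.mpr ⟨g, hg, le_refl g⟩)
    have h0 := ht _ hmem
    rw [← _root_.map_smul, smul_eq_mul, Submodule.mkQ_apply, Submodule.Quotient.mk_eq_zero] at h0
    -- al (mon g) * r ∈ Jn; multiply by al d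
    have h1 : al (monomial g (1:k)) * r * al (d : S) ∈ Jn (k := k) n :=
      Ideal.mul_mem_right _ _ h0
    have h2 : al (monomial g (1:k)) * r * al (d : S) = al (monomial g (1:k) * f) := by
      rw [mul_assoc, ← hfd, IsLocalization.mk'_spec, ← map_mul]
    rw [h2] at h1
    exact map_spanMon_contract h1
  -- conclude f is in the saturation
  have hfQ : f ∈ spanMon (k := k) (Q n) := by
    rw [mem_spanMon_Q]
    intro e₀ he₀
    have hx' : ∀ g : Fin 3 →₀ ℕ, deg g = t →
        ∃ p ∈ P n, p ≤ g + e₀ := by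
      intro g hg
      have := haxis g hg
      rw [mem_spanMon] at this
      apply this
      rw [MvPolynomial.mem_support_iff, MvPolynomial.coeff_monomial_mul]
      rw [one_mul]
      exact MvPolynomial.mem_support_iff.mp he₀
    refine ⟨?_, ?_, ?_⟩
    · obtain ⟨p, ⟨i, j, kk, hs, rfl⟩, hple⟩ := hx' (ev 0 0 t) (by simp [deg])
      rw [ev_le] at hple
      simp only [Finsupp.add_apply, ev_app0, ev_app1, ev_app2] at hple
      omega
    · obtain ⟨p, ⟨i, j, kk, hs, rfl⟩, hple⟩ := hx' (ev t 0 0) (by simp [deg])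
      rw [ev_le] at hple
      simp only [Finsupp.add_apply, ev_app0, ev_app1, ev_app2] at hple
      omega
    · obtain ⟨p, ⟨i, j, kk, hs, rfl⟩, hple⟩ := hx' (ev 0 t 0) (by simp [deg])
      rw [ev_le] at hple
      simp only [Finsupp.add_apply, ev_app0, ev_app1, ev_app2] at hple
      omega
  -- now x = mkQ r with r = mk' f d
  have hu : IsUnit (al (d : S)) := IsLocalization.map_units _ d
  have hdx : al (d : S) • Submodule.mkQ (Jn (k := k) n) r ∈ WR k n := by
    rw [← _root_.map_smul, smul_eq_mul]
    have : al (d : S) * r = al f := by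
      rw [← hfd, mul_comm]
      exact IsLocalization.mk'_spec _ f d
    rw [this]
    have hmemW : ∀ z, z ∈ Wspan k n → z ∈ WR k n := fun z hz => hz
    exact hmemW _ (satClass hfQ)
  set v : Localization.AtPrime (mvMax k 3) := ((hu.unit⁻¹ : (Localization.AtPrime (mvMax k 3))ˣ) : Localization.AtPrime (mvMax k 3)) with hvdef
  have hv : v * al (d : S) = 1 := IsUnit.val_inv_mul hu
  have hxeq : Submodule.mkQ (Jn (k := k) n) r
      = v • (al (d : S) • Submodule.mkQ (Jn (k := k) n) r) := by
    rw [smul_smul, hv, one_smul]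
  rw [hxeq]
  exact Submodule.smul_mem _ _ hdx

set_option maxHeartbeats 2000000 in
/-- Upper bound on the length of `H⁰`. -/
lemma length_upper (n : ℕ) :
    moduleLength (Localization.AtPrime (mvMax k 3))
      ↥(H0 (IsLocalRing.maximalIdeal (Localization.AtPrime (mvMax k 3)))
        (Localization.AtPrime (mvMax k 3) ⧸ Jn (k := k) n))
      ≤ ((Dfin n).card : ENNReal) := by
  classical
  set H := H0 (IsLocalRing.maximalIdeal (Localization.AtPrime (mvMax k 3)))
      (Localization.AtPrime (mvMax k 3) ⧸ Jn (k := k) n) with hH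
  have finW : FiniteDimensional k ↥(Wspan k n) :=
    FiniteDimensional.span_of_finite k (((DfinE n).finite_toSet).image _)
  set F : Submodule (Localization.AtPrime (mvMax k 3)) ↥H →
      Submodule k (Localization.AtPrime (mvMax k 3) ⧸ Jn (k := k) n) :=
    fun p => Submodule.restrictScalars k (Submodule.map H.subtype p) with hF
  have hFle : ∀ p, F p ≤ Wspan k n := by
    intro p x hx
    have hx2 : x ∈ Submodule.map H.subtype p := hx
    have hx3 : x ∈ H := Submodule.map_subtype_le H p hx2
    exact H0_le_WR n hx3
  have hFD : ∀ p, FiniteDimensional k ↥(F p) :=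
    fun p => Submodule.finiteDimensional_of_le (hFle p)
  have hFlt : ∀ p q, p < q → F p < F q := by
    intro p q hpq
    obtain ⟨hle, x, hxq, hxp⟩ := SetLike.lt_iff_le_and_exists.mp hpq
    rw [SetLike.lt_iff_le_and_exists]
    refine ⟨fun z hz => ?_, H.subtype x, ⟨x, hxq, rfl⟩, ?_⟩
    · obtain ⟨y, hy, rfl⟩ := hz
      exact ⟨y, hle hy, rfl⟩
    · rintro ⟨y, hy, hyx⟩
      have : y = x := Subtype.ext (by exact hyx)
      exact hxp (this ▸ hy)
  rw [moduleLength]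
  apply iSup_le
  intro s
  rw [Nat.cast_le]
  have hstep : ∀ i : Fin (s.length + 1), (i : ℕ) ≤ Module.finrank k ↥(F (s.toFun i)) := by
    intro i
    induction i using Fin.induction with
    | zero => exact Nat.zero_le _
    | succ i ih =>
      have hlt : F (s.toFun i.castSucc) < F (s.toFun i.succ) := hFlt _ _ (s.step i)
      haveI := hFD (s.toFun i.succ)
      have := Submodule.finrank_lt_finrank_of_lt hlt
      have hc : (i.castSucc : ℕ) = (i : ℕ) := rfl
      rw [Fin.val_succ]
      omega
  have hlast := hstep (Fin.last s.length)
  rw [Fin.val_last] at hlast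
  have hW : Module.finrank k ↥(F (s.toFun (Fin.last s.length)))
      ≤ Module.finrank k ↥(Wspan k n) :=
    Submodule.finrank_mono (hFle _)
  have hWc : Module.finrank k ↥(Wspan k n) ≤ (Dfin n).card := by
    have h1 : Wspan k n = Submodule.span k
        ↑((DfinE n).image (fun e => cls (k := k) n (monomial e 1))) := by
      rw [Wspan, Finset.coe_image]
    rw [h1]
    calc Module.finrank k ↥(Submodule.span k
          (↑((DfinE n).image (fun e => cls (k := k) n (monomial e 1))) :
            Set (Localization.AtPrime (mvMax k 3) ⧸ Jn (k := k) n)))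
        ≤ ((DfinE n).image (fun e => cls (k := k) n (monomial e 1))).card :=
          finrank_span_finset_le_card _
      _ ≤ (DfinE n).card := Finset.card_image_le
      _ = (Dfin n).card := card_DfinE n
  omega

/-- The exact length of `H⁰`. -/
lemma length_eq (n : ℕ) :
    moduleLength (Localization.AtPrime (mvMax k 3))
      ↥(H0 (IsLocalRing.maximalIdeal (Localization.AtPrime (mvMax k 3)))
        (Localization.AtPrime (mvMax k 3) ⧸ Jn (k := k) n))
      = ((Dfin n).card : ENNReal) :=
  le_antisymm (length_upper n) (length_lower n)

end Upper
end EpsAux2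



open Pointwise MvPolynomial ENNReal Filter

namespace EpsAux2
open EpsAux

section Final
variable {k : Type*} [Field k]

local notation "S" => MvPolynomial (Fin 3) k
local notation "RR" => Localization.AtPrime (mvMax k 3)
local notation "al" => algebraMap (MvPolynomial (Fin 3) k) (Localization.AtPrime (mvMax k 3))

lemma P1_eq : P 1 = {ev 1 1 0, ev 0 1 1, ev 1 0 1} := by
  ext e
  constructor
  · rintro ⟨i, j, kk, hs, rfl⟩
    have h3 : (i = 1 ∧ j = 0 ∧ kk = 0) ∨ (i = 0 ∧ j = 1 ∧ kk = 0) ∨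
        (i = 0 ∧ j = 0 ∧ kk = 1) := by omega
    rcases h3 with ⟨rfl, rfl, rfl⟩ | ⟨rfl, rfl, rfl⟩ | ⟨rfl, rfl, rfl⟩
    · exact Or.inl rfl
    · exact Or.inr (Or.inl rfl)
    · exact Or.inr (Or.inr rfl)
  · rintro (rfl | rfl | rfl)
    · exact ⟨1, 0, 0, rfl, rfl⟩
    · exact ⟨0, 1, 0, rfl, rfl⟩
    · exact ⟨0, 0, 1, rfl, rfl⟩

lemma XX01 : (X 0 : S) * X 1 = monomial (ev 1 1 0) 1 := by
  rw [show (X 0 : S) = monomial (Finsupp.single (0 : Fin 3) 1) 1 from rfl,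
    show (X 1 : S) = monomial (Finsupp.single (1 : Fin 3) 1) 1 from rfl,
    monomial_mul, one_mul, single_ev0, single_ev1, ev_add]

lemma XX12 : (X 1 : S) * X 2 = monomial (ev 0 1 1) 1 := by
  rw [show (X 1 : S) = monomial (Finsupp.single (1 : Fin 3) 1) 1 from rfl,
    show (X 2 : S) = monomial (Finsupp.single (2 : Fin 3) 1) 1 from rfl,
    monomial_mul, one_mul, single_ev1, single_ev2, ev_add]

lemma XX20 : (X 2 : S) * X 0 = monomial (ev 1 0 1) 1 := by
  rw [show (X 2 : S) = monomial (Finsupp.single (2 : Fin 3) 1) 1 from rfl,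
    show (X 0 : S) = monomial (Finsupp.single (0 : Fin 3) 1) 1 from rfl,
    monomial_mul, one_mul, single_ev2, single_ev0, ev_add]

lemma I_pow_eq_Jn (I : Ideal (Localization.AtPrime (mvMax k 3)))
    (hI : I = Ideal.span {al (X 0 * X 1), al (X 1 * X 2), al (X 2 * X 0)}) (n : ℕ) :
    I ^ n = Jn (k := k) n := by
  have h1 : I = Ideal.map al (spanMon (k := k) (P 1)) := by
    rw [hI, spanMon, P1_eq, Ideal.map_span]
    congr 1
    simp only [Set.image_insert_eq, Set.image_singleton, XX01, XX12, XX20]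
  rw [h1, ← Ideal.map_pow, pIdeal_pow]
  rfl

/-- The value of the length sequence. -/
lemma epsSeq_eq (I : Ideal (Localization.AtPrime (mvMax k 3)))
    (hI : I = Ideal.span {al (X 0 * X 1), al (X 1 * X 2), al (X 2 * X 0)}) (n : ℕ) :
    epsSeq (IsLocalRing.maximalIdeal (Localization.AtPrime (mvMax k 3))) I 3 n
      = 6 / (n : ℝ≥0∞) ^ 3 * ((Dfin n).card : ℝ≥0∞) := by
  rw [epsSeq, I_pow_eq_Jn I hI n, length_eq n]
  norm_num [Nat.factorial]

/-- The real sequence tends to `1/2`. -/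
lemma real_tendsto :
    Tendsto (fun n : ℕ => 6 * ((Dfin n).card : ℝ) / (n : ℝ) ^ 3) atTop (nhds (1/2)) := by
  have hlow : Tendsto (fun n : ℕ => 1/2 - 1/(n : ℝ)) atTop (nhds (1/2)) := by
    have := tendsto_one_div_atTop_nhds_zero_nat (𝕜 := ℝ)
    have h2 := Tendsto.const_sub (1/2 : ℝ) this
    simpa using h2
  have hhigh : Tendsto (fun n : ℕ => 1/2 + 1/(n : ℝ)) atTop (nhds (1/2)) := by
    have := tendsto_one_div_atTop_nhds_zero_nat (𝕜 := ℝ)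
    have h2 := Tendsto.const_add (1/2 : ℝ) this
    simpa using h2
  apply tendsto_of_tendsto_of_tendsto_of_le_of_le' hlow hhigh
  · filter_upwards [eventually_ge_atTop 1] with n hn
    have hb := (Dfin_bounds n hn).1
    have hnR : (1 : ℝ) ≤ (n : ℝ) := by exact_mod_cast hn
    have hn3 : (0 : ℝ) < (n : ℝ)^3 := by positivity
    have hbR : ((n : ℝ))^3 ≤ 12 * ((Dfin n).card : ℝ) + (n : ℝ)^2 := by
      exact_mod_cast hb
    rw [le_div_iff₀ hn3]
    have hid : (1/2 - 1/(n:ℝ)) * (n:ℝ)^3 = (n:ℝ)^3/2 - (n:ℝ)^2 := by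
      field_simp
    rw [hid]
    have hsq : (0:ℝ) ≤ (n:ℝ)^2 := by positivity
    linarith
  · filter_upwards [eventually_ge_atTop 1] with n hn
    have hb := (Dfin_bounds n hn).2
    have hnR : (1 : ℝ) ≤ (n : ℝ) := by exact_mod_cast hn
    have hn3 : (0 : ℝ) < (n : ℝ)^3 := by positivity
    have hbR : 12 * ((Dfin n).card : ℝ) ≤ ((n : ℝ))^3 + 2*(n : ℝ)^2 := by
      exact_mod_cast hb
    rw [div_le_iff₀ hn3]
    have hid : (1/2 + 1/(n:ℝ)) * (n:ℝ)^3 = (n:ℝ)^3/2 + (n:ℝ)^2 := by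
      field_simp
    rw [hid]
    linarith

/-- The `ℝ≥0∞`-valued sequence tends to `1/2`. -/
lemma ennreal_tendsto :
    Tendsto (fun n : ℕ => 6 / (n : ℝ≥0∞) ^ 3 * ((Dfin n).card : ℝ≥0∞)) atTop
      (nhds (1/2 : ℝ≥0∞)) := by
  have h1 : Tendsto (fun n : ℕ => ENNReal.ofReal (6 * ((Dfin n).card : ℝ) / (n : ℝ) ^ 3))
      atTop (nhds (ENNReal.ofReal (1/2))) :=
    (ENNReal.continuous_ofReal.tendsto _).comp real_tendsto
  have h2 : (ENNReal.ofReal (1/2) : ℝ≥0∞) = 1/2 := by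
    rw [ENNReal.ofReal_div_of_pos (by norm_num)]
    norm_num
  rw [h2] at h1
  apply Tendsto.congr' _ h1
  filter_upwards [eventually_ge_atTop 1] with n hn
  have hn0 : (0 : ℝ) < (n : ℝ)^3 := by positivity
  rw [ENNReal.ofReal_div_of_pos hn0, ENNReal.ofReal_mul (by norm_num)]
  have e1 : ENNReal.ofReal ((Dfin n).card : ℝ) = ((Dfin n).card : ℝ≥0∞) :=
    ENNReal.ofReal_natCast _
  have e2 : ENNReal.ofReal ((n : ℝ)^3) = (n : ℝ≥0∞)^3 := by
    rw [ENNReal.ofReal_pow (by positivity)]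
    rw [ENNReal.ofReal_natCast]
  have e3 : ENNReal.ofReal (6 : ℝ) = (6 : ℝ≥0∞) := by
    norm_num
  rw [e1, e2, e3]
  rw [mul_comm (6 : ℝ≥0∞) _, mul_div_assoc, mul_comm]

/-- Final result, in terms of `epsSeq`. -/
theorem main_result (I : Ideal (Localization.AtPrime (mvMax k 3)))
    (hI : I = Ideal.span {al (X 0 * X 1), al (X 1 * X 2), al (X 2 * X 0)}) :
    Filter.limsup (epsSeq (IsLocalRing.maximalIdeal (Localization.AtPrime (mvMax k 3))) I 3)
      atTop = 1 / 2 := by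
  have heq : (epsSeq (IsLocalRing.maximalIdeal (Localization.AtPrime (mvMax k 3))) I 3)
      = fun n : ℕ => 6 / (n : ℝ≥0∞) ^ 3 * ((Dfin n).card : ℝ≥0∞) :=
    funext (epsSeq_eq I hI)
  rw [heq]
  exact ennreal_tendsto.limsup_eq

end Final
end EpsAux2


/-- **Example.** For `I = (xy, yz, zx)` in `R = k[x,y,z]` localized at `𝔪 = (x,y,z)`,
the ε-multiplicity is `ε(I) = 1/2`. -/
theorem epsMultiplicity_xy_yz_zx (k : Type*) [Field k]
    (I : Ideal (LocPolyRing k 3))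
    (hI : I = Ideal.span {
      algebraMap (MvPolynomial (Fin 3) k) (LocPolyRing k 3)
        (MvPolynomial.X 0 * MvPolynomial.X 1),
      algebraMap (MvPolynomial (Fin 3) k) (LocPolyRing k 3)
        (MvPolynomial.X 1 * MvPolynomial.X 2),
      algebraMap (MvPolynomial (Fin 3) k) (LocPolyRing k 3)
        (MvPolynomial.X 2 * MvPolynomial.X 0)}) :
    Filter.limsup (epsSeq (IsLocalRing.maximalIdeal (LocPolyRing k 3)) I 3) atTop
      = 1 / 2 := by
  exact EpsAux2.main_result I hI

end
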